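/- Let N be a nonredundant workflow net. Then N is generalised sound (k-sound for all k ≥ 1) if and only if N is strongly k-sound for all k ≥ 0. Moreover, if N is not strongly k-sound, then there exists k' ≤ k + (‖T‖+2)^{|T|} · max(‖T‖,k) · |P|(|P|+2) such that N is not k'-sound. -/

import Mathlib

/-- A Petri net over places `P` and transitions `T`, given by pre/post arc weights. -/
structure PetriNet (P T : Type) where
  pre : T → P → ℕ
  post : T → P → ℕ

namespace PetriNet

variable {P T : Type}

/-- Transition `t` is enabled in marking `m`. -/
def Enabled (N : PetriNet P T) (m : P → ℕ) (t : T) : Prop := ∀ p, N.pre t p ≤ m p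

/-- Firing transition `t` in `m` yields `m'`. -/
def Fire (N : PetriNet P T) (m : P → ℕ) (t : T) (m' : P → ℕ) : Prop :=
  N.Enabled m t ∧ ∀ p, m' p = m p - N.pre t p + N.post t p

def Step (N : PetriNet P T) (m m' : P → ℕ) : Prop := ∃ t, N.Fire m t m'

/-- Reachability `m →* m'`. -/
def Reach (N : PetriNet P T) : (P → ℕ) → (P → ℕ) → Prop := Relation.ReflTransGen N.Step

/-- Effect of a transition, as an integer vector. -/
def eff (N : PetriNet P T) (t : T) (p : P) : ℤ := (N.post t p : ℤ) - (N.pre t p : ℤ)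

def ZStep (N : PetriNet P T) (m m' : P → ℤ) : Prop := ∃ t, ∀ p, m' p = m p + N.eff t p

/-- Z-reachability: no enabledness constraint, markings range over ℤ. -/
def ZReach (N : PetriNet P T) : (P → ℤ) → (P → ℤ) → Prop := Relation.ReflTransGen N.ZStep

/-- Maximal arc weight `‖T‖`. -/
def maxW (N : PetriNet P T) [Fintype P] [Fintype T] : ℕ :=
  Finset.univ.sup fun t => Finset.univ.sup fun p => max (N.pre t p) (N.post t p)

/-- Edge relation of the underlying graph, on `P ⊕ T`. -/
def Edge (N : PetriNet P T) : (P ⊕ T) → (P ⊕ T) → Prop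
  | Sum.inl p, Sum.inr t => 0 < N.pre t p
  | Sum.inr t, Sum.inl p => 0 < N.post t p
  | _, _ => False

/-- `N` is bounded from marking `m`. -/
def BoundedFrom (N : PetriNet P T) (m : P → ℕ) : Prop :=
  ∃ b : ℕ, ∀ m', N.Reach m m' → ∀ p, m' p ≤ b

/-- `N` is cyclic from marking `m`. -/
def CyclicFrom (N : PetriNet P T) (m : P → ℕ) : Prop :=
  ∀ m', N.Reach m m' → N.Reach m' m

/-- Transition `t` is quasi-live from `m`. -/
def QuasiLiveT (N : PetriNet P T) (m : P → ℕ) (t : T) : Prop :=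
  ∃ m', N.Reach m m' ∧ N.Enabled m' t

/-- `N` is quasi-live from `m`. -/
def QuasiLiveFrom (N : PetriNet P T) (m : P → ℕ) : Prop :=
  ∀ t, N.QuasiLiveT m t

/-- Transition `t` is live from `m`. -/
def LiveT (N : PetriNet P T) (m : P → ℕ) (t : T) : Prop :=
  ∀ m', N.Reach m m' → N.QuasiLiveT m' t

end PetriNet

/-- A workflow net: a Petri net with initial place `ini`, final place `fin`,
no production into `ini`, no consumption from `fin`, and every node on a path
from `ini` to `fin` in the underlying graph. -/
structure WorkflowNet (P T : Type) extends PetriNet P T where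
  ini : P
  fin : P
  ini_ne_fin : ini ≠ fin
  no_prod_ini : ∀ t, post t ini = 0
  no_cons_fin : ∀ t, pre t fin = 0
  on_path : ∀ v : P ⊕ T,
    Relation.ReflTransGen toPetriNet.Edge (Sum.inl ini) v ∧
    Relation.ReflTransGen toPetriNet.Edge v (Sum.inl fin)

namespace WorkflowNet

variable {P T : Type}

/-- The marking `{i : k}`. -/
def iniM [DecidableEq P] (N : WorkflowNet P T) (k : ℕ) : P → ℕ :=
  fun p => if p = N.ini then k else 0

/-- The marking `{f : k}`. -/
def finM [DecidableEq P] (N : WorkflowNet P T) (k : ℕ) : P → ℕ :=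
  fun p => if p = N.fin then k else 0

/-- `N` is `k`-sound. -/
def KSound [DecidableEq P] (N : WorkflowNet P T) (k : ℕ) : Prop :=
  ∀ m, N.toPetriNet.Reach (N.iniM k) m → N.toPetriNet.Reach m (N.finM k)

/-- `N` is generalised sound. -/
def GeneralisedSound [DecidableEq P] (N : WorkflowNet P T) : Prop :=
  ∀ k : ℕ, 1 ≤ k → N.KSound k

/-- `N` is structurally sound. -/
def StructurallySound [DecidableEq P] (N : WorkflowNet P T) : Prop :=
  ∃ k : ℕ, 1 ≤ k ∧ N.KSound k

/-- All places of `N` are nonredundant. -/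
def Nonredundant [DecidableEq P] (N : WorkflowNet P T) : Prop :=
  ∀ p : P, ∃ (k : ℕ) (m : P → ℕ), N.toPetriNet.Reach (N.iniM k) m ∧ 0 < m p

/-- `N` is strongly `k`-sound. -/
def StronglyKSound [DecidableEq P] (N : WorkflowNet P T) (k : ℕ) : Prop :=
  ∀ m : P → ℕ,
    N.toPetriNet.ZReach (fun p => ((N.iniM k) p : ℤ)) (fun p => (m p : ℤ)) →
    N.toPetriNet.Reach m (N.finM k)

end WorkflowNet

/-!
If `{i:k} →*_ℤ m`, a Steinitz-type lemma (proved by the Grinberg–Sevastyanov peeling argument)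
reorders the run so that, on every place, each prefix stays above `-|P|·‖T‖`. Nonredundancy
provides, from `{i:ℓ}` with `ℓ ≤ c·(‖T‖+1)^|T|`, a marking `m'` with at least `c` tokens on every
place: fire the transitions in the order in which their input places become markable, raising the
budget by the factor `‖T‖+1` at each step. With `c = ‖T‖·(|P|+1)` the reordered run is fireable
on top of `m'`, so `{i:ℓ+k} →* m + m'`. Soundness for `ℓ` and `ℓ+k` then gives
`m + m' →* m + {f:ℓ} →* {f:ℓ+k}`, and since tokens on `f` are never consumed, `m →* {f:k}`.
-/

open Finset Filter Topology

lemma eventually_add_smul_mem_Icc {ι : Type*} [Finite ι] {lo hi μ v : ι → ℝ}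
    (hμ : μ ∈ Set.Icc lo hi) (hv : ∀ i, μ i ∉ Set.Ioo (lo i) (hi i) → v i = 0) :
    ∀ᶠ t in 𝓝 (0 : ℝ), μ + t • v ∈ Set.Icc lo hi := by
  simp only [← Set.pi_univ_Icc, Set.mem_pi, Set.mem_univ, true_implies, Pi.add_apply,
    Pi.smul_apply, smul_eq_mul]
  refine eventually_all.mpr fun i => ?_
  by_cases hi : μ i ∈ Set.Ioo (lo i) (hi i)
  · have hlim : Tendsto (fun t : ℝ => μ i + t * v i) (𝓝 0) (𝓝 (μ i)) := by
      have hcont : Continuous fun t : ℝ => μ i + t * v i := by fun_prop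
      simpa using hcont.tendsto 0
    exact (hlim.eventually (isOpen_Ioo.mem_nhds hi)).mono fun t ht => Set.Ioo_subset_Icc_self ht
  · exact .of_forall fun t => by simpa [hv i hi] using ⟨hμ.1 i, hμ.2 i⟩

/-- A dependency among the columns of the fractional coordinates is a direction in which an extreme
point could move both ways inside the polytope. -/
lemma linearIndependent_of_mem_extremePoints {ι κ : Type*} [Fintype ι] (f : ι → κ → ℝ)
    {lo hi μ : ι → ℝ} {b : κ → ℝ}
    (hμ : μ ∈ (Set.Icc lo hi ∩ {μ | ∑ i, μ i • f i = b}).extremePoints ℝ) :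
    LinearIndependent ℝ fun i : {i // μ i ∈ Set.Ioo (lo i) (hi i)} => f i := by
  classical
  obtain ⟨⟨hμIcc, hμb⟩, hμext⟩ := hμ
  by_contra hdep
  obtain ⟨g, hg, i₀, hi₀⟩ := Fintype.not_linearIndependent_iff.mp hdep
  set v : ι → ℝ := fun i => if h : μ i ∈ Set.Ioo (lo i) (hi i) then g ⟨i, h⟩ else 0
  have hvg : ∀ i : {i // μ i ∈ Set.Ioo (lo i) (hi i)}, v i = g i := fun i => dif_pos i.2
  have hv : ∑ i, v i • f i = 0 := by
    have h₂ : ∀ i : {i // μ i ∉ Set.Ioo (lo i) (hi i)}, v i = 0 := fun i => dif_neg i.2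
    rw [← Fintype.sum_subtype_add_sum_subtype (fun i => μ i ∈ Set.Ioo (lo i) (hi i))]
    simp only [hvg, h₂, hg, zero_smul, sum_const_zero, add_zero]
  have hnear : ∀ᶠ t in 𝓝 (0 : ℝ), μ + t • v ∈ Set.Icc lo hi ∩ {μ | ∑ i, μ i • f i = b} := by
    refine (eventually_add_smul_mem_Icc hμIcc fun i hi => dif_neg hi).mono fun t ht => ⟨ht, ?_⟩
    show ∑ i, (μ + t • v) i • f i = b
    simp only [Pi.add_apply, Pi.smul_apply, smul_eq_mul, add_smul,
      sum_add_distrib, mul_smul, ← smul_sum, hv, smul_zero, add_zero]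
    exact hμb
  obtain ⟨t, ⟨htp, htm⟩, ht0⟩ := ((hnear.and
      ((continuous_neg.tendsto' (0 : ℝ) 0 neg_zero).eventually hnear)).filter_mono
      nhdsWithin_le_nhds |>.and self_mem_nhdsWithin).exists (f := 𝓝[>] (0 : ℝ))
  have htv : μ + t • v = μ :=
    hμext htp (by simpa [neg_smul, ← sub_eq_add_neg] using htm) (mem_openSegment_add_sub μ (t • v))
  have htvi₀ := congrFun htv i₀
  rw [Pi.add_apply, Pi.smul_apply, smul_eq_mul, add_eq_left, hvg] at htvi₀
  exact hi₀ ((mul_eq_zero.1 htvi₀).resolve_left ht0.ne')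

theorem exists_mem_Icc_sum_smul_eq_card_Ioo_le {ι κ : Type*} [Fintype ι] [Fintype κ]
    (f : ι → κ → ℝ) {lo hi μ₀ : ι → ℝ} {b : κ → ℝ}
    (hμ₀ : μ₀ ∈ Set.Icc lo hi) (hb : ∑ i, μ₀ i • f i = b) :
    ∃ μ ∈ Set.Icc lo hi, ∑ i, μ i • f i = b ∧
      #{i | μ i ∈ Set.Ioo (lo i) (hi i)} ≤ Fintype.card κ := by
  have hK : IsCompact (Set.Icc lo hi ∩ {μ | ∑ i, μ i • f i = b}) :=
    isCompact_Icc.inter_right (isClosed_eq (by fun_prop) continuous_const)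
  obtain ⟨μ, hμ⟩ := hK.extremePoints_nonempty ⟨μ₀, hμ₀, hb⟩
  refine ⟨μ, hμ.1.1, hμ.1.2, ?_⟩
  simpa [Fintype.card_subtype] using
    (linearIndependent_of_mem_extremePoints f hμ).fintype_card_le_finrank

namespace Steinitz

lemma neg_mul_le_add_sum_of_length_le {α : Type*} {y : α → ℤ} {W d : ℕ}
    (hy : ∀ a, |y a| ≤ W) {s : ℤ} (hs : 0 ≤ s) {l : List α} (hl : l.length ≤ d) :
    -(d * W : ℤ) ≤ s + (l.map y).sum := by
  have hsum := List.card_nsmul_le_sum (l.map y) (-W)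
    (by simpa using fun a _ => neg_le_of_abs_le (hy a))
  have hl' : (l.length : ℤ) ≤ d := by exact_mod_cast hl
  simp only [List.length_map, nsmul_eq_mul, mul_neg] at hsum
  nlinarith [(Nat.cast_nonneg W : (0 : ℤ) ≤ W)]

lemma eq_zero_of_mem_Icc_indicator {ι : Type*} {S : Finset ι} {μ : ι → ℝ}
    (hμ : μ ∈ Set.Icc 0 ((S : Set ι).indicator 1)) {i : ι} (hi : i ∉ S) : μ i = 0 :=
  le_antisymm (by simpa [hi] using hμ.2 i) (hμ.1 i)

lemma sum_mul_eq_sum_mem_of_mem_Icc_indicator {ι : Type*} [Fintype ι] {S : Finset ι}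
    {μ : ι → ℝ} (hμ : μ ∈ Set.Icc 0 ((S : Set ι).indicator 1)) (g : ι → ℝ) :
    ∑ i, μ i * g i = ∑ i ∈ S, μ i * g i :=
  (sum_subset (subset_univ S) fun i _ hi => by
    rw [eq_zero_of_mem_Icc_indicator hμ hi, zero_mul]).symm

lemma exists_eq_zero_of_sum_le {ι : Type*} {S : Finset ι} {ν : ι → ℝ}
    (hν : ∀ i ∈ S, ν i ∈ Set.Icc 0 1) {r : ℕ} (hfrac : #{i ∈ S | ν i ∈ Set.Ioo 0 1} ≤ r + 1)
    (hsum : ∑ i ∈ S, ν i ≤ #S - (r + 1)) : ∃ i ∈ S, ν i = 0 := by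
  classical
  by_contra! hne
  set F := {i ∈ S | ν i ∈ Set.Ioo 0 1}
  have hone : ∀ i ∈ S.filter (fun i => ν i ∉ Set.Ioo 0 1), ν i = 1 := fun i hi => by
    obtain ⟨hiS, hiF⟩ := mem_filter.mp hi
    obtain ⟨h₀, h₁⟩ := hν i hiS
    by_contra h
    exact hiF ⟨lt_of_le_of_ne h₀ (hne i hiS).symm, lt_of_le_of_ne h₁ h⟩
  have hsplit : ∑ i ∈ S, ν i = ∑ i ∈ F, ν i + (#S - #F) := by
    have hcard : (#F : ℝ) + #(S.filter fun i => ν i ∉ Set.Ioo 0 1) = #S := by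
      exact_mod_cast card_filter_add_card_filter_not (s := S) (fun i => ν i ∈ Set.Ioo 0 1)
    rw [← sum_filter_add_sum_filter_not S (fun i => ν i ∈ Set.Ioo 0 1), sum_congr rfl hone,
      sum_const, nsmul_one]
    linarith
  rcases F.eq_empty_or_nonempty with hF | hF
  · rw [hF, sum_empty, card_empty] at hsplit
    push_cast at hsplit
    linarith
  · have hpos := sum_pos (fun i hi => (mem_filter.mp hi).2.1) hF
    have hFr : (#F : ℝ) ≤ r + 1 := by exact_mod_cast hfrac
    linarith

section

variable {ι P : Type*} [Fintype ι] (x : ι → P → ℤ)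

/-- `x i` with an extra coordinate `1`, so that one linear system over `Option P` constrains both
the total weight of a selection and its weighted sum. -/
def aug (i : ι) : Option P → ℝ := fun o => o.elim 1 fun p => x i p

lemma smul_sum_aug_eq_smul_iff (μ : ι → ℝ) (a c : ℝ) :
    a • ∑ i, μ i • aug x i = c • ∑ i, aug x i ↔
      a * ∑ i, μ i = c * Fintype.card ι ∧
        ∀ p, a * ∑ i, μ i * x i p = c * ∑ i, (x i p : ℝ) := by
  simp [funext_iff, Option.forall, aug, Finset.sum_apply]

def HasWeights (S : Finset ι) (c : ℝ) : Prop :=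
  ∃ μ ∈ Set.Icc (0 : ι → ℝ) ((S : Set ι).indicator 1),
    (Fintype.card ι : ℝ) • ∑ i, μ i • aug x i = c • ∑ i, aug x i

/-- The invariant of the Grinberg–Sevastyanov proof of the Steinitz lemma: weights `μ ≤ 1_S` of
total mass `#S - |P|` whose weighted sum is the fraction `(#S - |P|) / n` of `∑ i, x i`. -/
def Admissible [Fintype P] (S : Finset ι) : Prop :=
  HasWeights x S (#S - Fintype.card P)

lemma admissible_univ [Fintype P] (h : Fintype.card P ≤ Fintype.card ι) :
    Admissible x univ := by
  set n := Fintype.card ι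
  set d := Fintype.card P
  have hdn : (d : ℝ) ≤ n := by exact_mod_cast h
  have hmul : (n : ℝ) * ((n - d) / n) = n - d := by
    rcases eq_or_ne (n : ℝ) 0 with h0 | h0
    · have : (d : ℝ) = 0 := le_antisymm (h0 ▸ hdn) d.cast_nonneg
      simp [h0, this]
    · field_simp
  refine ⟨fun _ => (n - d) / n, ⟨fun i => ?_, fun i => ?_⟩, ?_⟩
  · exact div_nonneg (by linarith) n.cast_nonneg
  · simpa using div_le_one_of_le₀ (by linarith) n.cast_nonneg
  · rw [smul_sum_aug_eq_smul_iff]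
    refine ⟨?_, fun p => ?_⟩
    · simp only [sum_const, card_univ, nsmul_eq_mul]
      linear_combination (n : ℝ) * hmul
    · rw [← mul_sum, ← mul_assoc, hmul, card_univ]

variable {x}

lemma sum_eq_of_smul_sum_aug_eq [Nonempty ι] {S : Finset ι} {μ : ι → ℝ} {c : ℝ}
    (hμ : μ ∈ Set.Icc 0 ((S : Set ι).indicator 1))
    (h : (Fintype.card ι : ℝ) • ∑ i, μ i • aug x i = c • ∑ i, aug x i) :
    ∑ i ∈ S, μ i = c := by
  have hmass := ((smul_sum_aug_eq_smul_iff x μ _ _).mp h).1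
  rw [show ∑ i, μ i = ∑ i ∈ S, μ i by
    simpa using sum_mul_eq_sum_mem_of_mem_Icc_indicator hμ 1] at hmass
  exact mul_left_cancel₀ (Nat.cast_ne_zero.2 Fintype.card_ne_zero) (hmass.trans (mul_comm _ _))

lemma HasWeights.smul {S : Finset ι} {c a : ℝ} (h : HasWeights x S c) (ha₀ : 0 ≤ a)
    (ha₁ : a ≤ 1) : HasWeights x S (a * c) := by
  obtain ⟨μ, hμ, heq⟩ := h
  refine ⟨a • μ, ⟨fun i => mul_nonneg ha₀ (hμ.1 i),
    fun i => (mul_le_of_le_one_left (hμ.1 i) ha₁).trans (hμ.2 i)⟩, ?_⟩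
  simp only [Pi.smul_apply, smul_eq_mul, mul_smul, ← smul_sum]
  rw [smul_comm, heq, smul_smul]

lemma HasWeights.exists_card_Ioo_le [Fintype P] {S : Finset ι} {c : ℝ} (h : HasWeights x S c) :
    ∃ μ ∈ Set.Icc (0 : ι → ℝ) ((S : Set ι).indicator 1),
      (Fintype.card ι : ℝ) • ∑ i, μ i • aug x i = c • ∑ i, aug x i ∧
        #{i ∈ S | μ i ∈ Set.Ioo 0 1} ≤ Fintype.card P + 1 := by
  obtain ⟨μ₀, hμ₀, heq⟩ := h
  obtain ⟨μ, hμ, hμeq, hcard⟩ := exists_mem_Icc_sum_smul_eq_card_Ioo_le (aug x) hμ₀ rfl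
  refine ⟨μ, hμ, hμeq ▸ heq, ?_⟩
  convert hcard using 2
  · ext j
    by_cases hj : j ∈ S
    · simp [hj]
    · simpa [hj] using fun h : 0 < μ j => h.le
  · simp

variable [Fintype P]

lemma Admissible.neg_mul_le_add_sum {S : Finset ι} (hS : Admissible x S) {W : ℕ}
    (hx : ∀ i p, |x i p| ≤ W) {s : P → ℤ} (hs : 0 ≤ s) (hse : ∀ p, 0 ≤ s p + ∑ i, x i p)
    (p : P) : -(Fintype.card P * W : ℤ) ≤ s p + ∑ i ∈ S, x i p := by
  obtain ⟨μ, hμ, heq⟩ := hS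
  rcases isEmpty_or_nonempty ι with hι | hι
  · rw [eq_empty_of_isEmpty S, sum_empty, add_zero]
    exact (neg_nonpos.2 (by positivity)).trans (hs p)
  have hmass := sum_eq_of_smul_sum_aug_eq hμ heq
  have hvec := ((smul_sum_aug_eq_smul_iff x μ _ _).mp heq).2 p
  rw [sum_mul_eq_sum_mem_of_mem_Icc_indicator hμ] at hvec
  set n := Fintype.card ι
  set d := Fintype.card P
  have hn : (0 : ℝ) < n := by exact_mod_cast Fintype.card_pos
  have hSn : (#S : ℝ) ≤ n := by exact_mod_cast card_le_univ S
  have hdS : (d : ℝ) ≤ #S := by linarith [sum_nonneg fun i (_ : i ∈ S) => hμ.1 i]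
  have hfrac : -(d * W : ℝ) ≤ ∑ i ∈ S, (1 - μ i) * x i p :=
    calc -(d * W : ℝ) = ∑ i ∈ S, (1 - μ i) * -(W : ℝ) := by
          rw [← sum_mul, sum_sub_distrib, hmass]; simp
      _ ≤ _ := sum_le_sum fun i hi => mul_le_mul_of_nonneg_left
          (neg_le_of_abs_le (by exact_mod_cast hx i p))
          (sub_nonneg.2 (by simpa [hi] using hμ.2 i))
  -- `n (s + ∑ μ x) = (n - #S + d) s + (#S - d) (s + ∑ x)`, a sum of nonnegative terms
  have hweighted : 0 ≤ s p + ∑ i ∈ S, μ i * x i p := by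
    refine (mul_nonneg_iff_of_pos_left hn).mp ?_
    have hs' : (0 : ℝ) ≤ s p := by exact_mod_cast hs p
    have hse' : (0 : ℝ) ≤ s p + ∑ i, (x i p : ℝ) := by exact_mod_cast hse p
    rw [mul_add, hvec]
    nlinarith
  have hsplit : ∑ i ∈ S, (x i p : ℝ) = ∑ i ∈ S, (1 - μ i) * x i p + ∑ i ∈ S, μ i * x i p := by
    rw [← sum_add_distrib]
    exact sum_congr rfl fun i _ => by ring
  exact_mod_cast (show -(d * W : ℝ) ≤ s p + ∑ i ∈ S, (x i p : ℝ) by linarith)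

/-- Scale the weights down to total mass `#S - 1 - |P|` and pass to a vertex: at most `|P| + 1`
weights are then fractional, which forces a zero weight on `S`. -/
lemma Admissible.exists_erase [DecidableEq ι] {S : Finset ι} (hS : Admissible x S)
    (hd : Fintype.card P < #S) : ∃ i ∈ S, Admissible x (S.erase i) := by
  set d := Fintype.card P
  have hkd : (d : ℝ) + 1 ≤ #S := by exact_mod_cast hd
  have hscale : (#S - 1 - d) / (#S - d) * (#S - d) = (#S : ℝ) - 1 - d :=
    div_mul_cancel₀ _ (by linarith)
  obtain ⟨μ, hμ, heq, hfrac⟩ := (hS.smul (a := (#S - 1 - d) / (#S - d))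
    (div_nonneg (by linarith) (by linarith)) (div_le_one_of_le₀ (by linarith) (by linarith))
    ).exists_card_Ioo_le
  rw [hscale] at heq
  have : Nonempty ι := ⟨(card_pos.1 ((Nat.zero_le d).trans_lt hd)).choose⟩
  obtain ⟨i, hi, hμi⟩ := exists_eq_zero_of_sum_le (S := S) (ν := μ) (r := d)
    (fun i hi => by simpa [hi] using And.intro (hμ.1 i) (hμ.2 i)) hfrac
    (by rw [sum_eq_of_smul_sum_aug_eq hμ heq]; linarith)
  refine ⟨i, hi, μ, ⟨hμ.1, fun j => ?_⟩, ?_⟩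
  · by_cases hj : j = i
    · simp [hj, hμi]
    · simpa [Set.indicator, hj] using hμ.2 j
  · rw [card_erase_of_mem hi, Nat.cast_sub (one_le_card.2 ⟨i, hi⟩), Nat.cast_one, heq]

lemma exists_list_of_admissible [DecidableEq ι] {W : ℕ} (hx : ∀ i p, |x i p| ≤ W)
    {s : P → ℤ} (hs : 0 ≤ s) (hse : ∀ p, 0 ≤ s p + ∑ i, x i p) (k : ℕ) {S : Finset ι}
    (hS : #S = Fintype.card P + k) (hadm : Admissible x S) :
    ∃ L : List ι, L.Nodup ∧ L.toFinset = S ∧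
      ∀ j p, -(Fintype.card P * W : ℤ) ≤ s p + ((L.take j).map fun i => x i p).sum := by
  induction k generalizing S with
  | zero =>
    exact ⟨S.toList, S.nodup_toList, S.toList_toFinset, fun j p =>
      neg_mul_le_add_sum_of_length_le (fun i => hx i p) (hs p)
        ((List.length_take_le' _ _).trans (by simp [hS]))⟩
  | succ k ih =>
    obtain ⟨i, hi, hadm'⟩ := hadm.exists_erase (by omega)
    obtain ⟨L, hnd, hL, hpre⟩ := ih (S := S.erase i) (by rw [card_erase_of_mem hi]; omega) hadm'
    have hiL : i ∉ L := by simp [← List.mem_toFinset, hL]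
    have hnd' : (L ++ [i]).Nodup := by simpa using hnd.concat hiL
    have hL' : (L ++ [i]).toFinset = S := by simp [List.toFinset_append, hL, insert_erase hi]
    refine ⟨L ++ [i], hnd', hL', fun j p => ?_⟩
    rcases le_or_gt j L.length with hj | hj
    · rw [List.take_append_of_le_length hj]
      exact hpre j p
    · rw [List.take_of_length_le (by simp; omega), ← List.sum_toFinset _ hnd', hL']
      exact hadm.neg_mul_le_add_sum hx hs hse p

end

theorem exists_perm_neg_mul_le_add_sum {α P : Type*} [Fintype P] (x : α → P → ℤ) {W : ℕ}
    (hx : ∀ a p, |x a p| ≤ W) {s : P → ℤ} (hs : 0 ≤ s) (l : List α)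
    (hl : ∀ p, 0 ≤ s p + (l.map fun a => x a p).sum) :
    ∃ l' : List α, l'.Perm l ∧
      ∀ j p, -(Fintype.card P * W : ℤ) ≤ s p + ((l'.take j).map fun a => x a p).sum := by
  rcases lt_or_ge l.length (Fintype.card P) with hlen | hlen
  · exact ⟨l, List.Perm.refl l, fun j p => neg_mul_le_add_sum_of_length_le (fun a => hx a p)
      (hs p) ((List.length_take_le' _ _).trans hlen.le)⟩
  have hl' : ∀ p, 0 ≤ s p + ∑ i : Fin l.length, x (l.get i) p := fun p => by
    simpa only [List.get_eq_getElem, Fin.sum_univ_fun_getElem l fun a => x a p] using hl p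
  obtain ⟨L, hnd, hL, hpre⟩ := exists_list_of_admissible (x := fun i p => x (l.get i) p)
    (fun i p => hx _ p) hs hl' (l.length - Fintype.card P) (S := univ) (by simp; omega)
    (admissible_univ _ (by simpa))
  have hperm : L.Perm (List.finRange l.length) :=
    (List.perm_ext_iff_of_nodup hnd (List.nodup_finRange _)).2 fun i => by
      simp [← List.mem_toFinset, hL]
  refine ⟨L.map l.get, by simpa [List.map_get_finRange] using hperm.map l.get, fun j p => ?_⟩
  rw [← List.map_take, List.map_map]
  exact hpre j p

end Steinitz

namespace PetriNet

variable {P T : Type} {N : PetriNet P T}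

def effSum (N : PetriNet P T) (ts : List T) (p : P) : ℤ := (ts.map fun t => N.eff t p).sum

@[simp] lemma effSum_nil (p : P) : N.effSum [] p = 0 := rfl

@[simp] lemma effSum_cons (t : T) (ts : List T) (p : P) :
    N.effSum (t :: ts) p = N.eff t p + N.effSum ts p := List.sum_cons

lemma effSum_perm {ts ts' : List T} (h : ts.Perm ts') : N.effSum ts = N.effSum ts' :=
  funext fun _ => (h.map _).sum_eq

lemma Fire.add_right {m m' : P → ℕ} {t : T} (h : N.Fire m t m') (c : P → ℕ) :
    N.Fire (m + c) t (m' + c) :=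
  ⟨fun p => (h.1 p).trans (Nat.le_add_right _ _), fun p => by
    have := h.1 p; have := h.2 p; simp only [Pi.add_apply]; omega⟩

lemma Reach.add_right {m m' : P → ℕ} (h : N.Reach m m') (c : P → ℕ) :
    N.Reach (m + c) (m' + c) := by
  induction h with
  | refl => exact .refl
  | tail _ hstep ih => obtain ⟨t, hf⟩ := hstep; exact ih.tail ⟨t, hf.add_right c⟩

lemma Reach.add_left {m m' : P → ℕ} (h : N.Reach m m') (c : P → ℕ) :
    N.Reach (c + m) (c + m') := by
  simpa only [add_comm c] using h.add_right c

lemma Fire.cast_eq {m m' : P → ℕ} {t : T} (h : N.Fire m t m') (p : P) :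
    (m' p : ℤ) = m p + N.eff t p := by
  have := h.1 p; have := h.2 p; simp only [eff]; omega

lemma Enabled.fire {m : P → ℕ} {t : T} (h : N.Enabled m t) :
    N.Fire m t fun p => m p - N.pre t p + N.post t p :=
  ⟨h, fun _ => rfl⟩

lemma Reach.zreach {m m' : P → ℕ} (h : N.Reach m m') :
    N.ZReach (fun p => (m p : ℤ)) (fun p => (m' p : ℤ)) := by
  induction h with
  | refl => exact .refl
  | tail _ hstep ih =>
    obtain ⟨t, hf⟩ := hstep
    exact ih.tail ⟨t, hf.cast_eq⟩

lemma ZReach.exists_effSum {a b : P → ℤ} (h : N.ZReach a b) :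
    ∃ ts : List T, ∀ p, b p = a p + N.effSum ts p := by
  induction h with
  | refl => exact ⟨[], by simp⟩
  | tail _ hstep ih =>
    obtain ⟨ts, hts⟩ := ih
    obtain ⟨t, ht⟩ := hstep
    exact ⟨t :: ts, fun p => by rw [ht p, hts p, effSum_cons]; ring⟩

lemma Reach.exists_of_add_unconsumed {a b c : P → ℕ} (hc : ∀ t p, 0 < c p → N.pre t p = 0)
    (h : N.Reach (a + c) b) : ∃ b', b = b' + c ∧ N.Reach a b' := by
  induction h with
  | refl => exact ⟨a, rfl, .refl⟩
  | tail _ hstep ih =>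
    obtain ⟨b', rfl, hr⟩ := ih
    obtain ⟨t, he, heq⟩ := hstep
    have hen : N.Enabled b' t := fun p => by
      have := he p; have := hc t p; simp only [Pi.add_apply] at *; omega
    refine ⟨_, funext fun p => ?_, hr.tail ⟨t, hen.fire⟩⟩
    have := heq p; have := hen p; simp only [Pi.add_apply] at *; omega

lemma exists_reach_iterate (t : T) (c : ℕ) {m : P → ℕ} (h : ∀ q, c * N.pre t q ≤ m q) :
    ∃ m', N.Reach m m' ∧ ∀ p, m' p + c * N.pre t p = m p + c * N.post t p := by
  induction c generalizing m with
  | zero => exact ⟨m, .refl, fun p => by simp⟩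
  | succ c ih =>
    have hen : N.Enabled m t := fun q => (Nat.le_mul_of_pos_left _ c.succ_pos).trans (h q)
    obtain ⟨m', hr, heq⟩ := ih (m := fun p => m p - N.pre t p + N.post t p) fun q => by
      have := h q; simp only [Nat.succ_mul] at this; omega
    refine ⟨m', Relation.ReflTransGen.head ⟨t, hen.fire⟩ hr, fun p => ?_⟩
    have := heq p; have := hen p; simp only [Nat.succ_mul]; omega

section maxW

variable [Fintype P] [Fintype T]

lemma max_pre_post_le_maxW (N : PetriNet P T) (t : T) (p : P) :
    max (N.pre t p) (N.post t p) ≤ N.maxW :=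
  (Finset.le_sup (f := fun q => max (N.pre t q) (N.post t q)) (Finset.mem_univ p)).trans
    (Finset.le_sup (f := fun t => Finset.univ.sup fun q => max (N.pre t q) (N.post t q))
      (Finset.mem_univ t))

lemma pre_le_maxW (N : PetriNet P T) (t : T) (p : P) : N.pre t p ≤ N.maxW :=
  (le_max_left _ _).trans (N.max_pre_post_le_maxW t p)

lemma post_le_maxW (N : PetriNet P T) (t : T) (p : P) : N.post t p ≤ N.maxW :=
  (le_max_right _ _).trans (N.max_pre_post_le_maxW t p)

lemma abs_eff_le_maxW (N : PetriNet P T) (t : T) (p : P) : |N.eff t p| ≤ N.maxW := by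
  have := N.pre_le_maxW t p; have := N.post_le_maxW t p
  rw [eff, abs_le]; omega

lemma exists_reach_of_maxW_le (ts : List T) {m : P → ℕ}
    (h : ∀ j p, (N.maxW : ℤ) ≤ m p + N.effSum (ts.take j) p) :
    ∃ m', N.Reach m m' ∧ ∀ p, (m' p : ℤ) = m p + N.effSum ts p := by
  induction ts generalizing m with
  | nil => exact ⟨m, .refl, by simp⟩
  | cons t ts ih =>
    have hen : N.Enabled m t := fun p => by
      have := h 0 p; have := N.pre_le_maxW t p; simp at *; omega
    have hfire := hen.fire
    obtain ⟨m', hr, heq⟩ := ih fun j p => by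
      have := h (j + 1) p; rw [hfire.cast_eq]; simp at this; linarith
    exact ⟨m', .head ⟨t, hfire⟩ hr, fun p => by rw [heq, hfire.cast_eq, effSum_cons]; ring⟩

end maxW

end PetriNet

namespace WorkflowNet

variable {P T : Type} (N : WorkflowNet P T)

def MarkableBy (L : List T) (p : P) : Prop := p = N.ini ∨ ∃ t ∈ L, 0 < N.post t p

def IsChain : List T → Prop
  | [] => True
  | t :: L => t ∉ L ∧ (∀ q, 0 < N.pre t q → N.MarkableBy L q) ∧ IsChain L

def IsSaturatedChain (L : List T) : Prop :=
  N.IsChain L ∧ ∀ t, (∀ q, 0 < N.pre t q → N.MarkableBy L q) → t ∈ L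

variable {N}

lemma markableBy_cons {t : T} {L : List T} {p : P} :
    N.MarkableBy (t :: L) p ↔ N.MarkableBy L p ∨ 0 < N.post t p := by
  simp only [MarkableBy, List.mem_cons, exists_eq_or_imp]
  rw [← or_assoc, or_right_comm]

lemma IsChain.nodup : ∀ {L : List T}, N.IsChain L → L.Nodup
  | [], _ => List.nodup_nil
  | _ :: _, ⟨ht, _, hL⟩ => List.nodup_cons.2 ⟨ht, hL.nodup⟩

lemma exists_isSaturatedChain_of_isChain [Fintype T] {L : List T} (hL : N.IsChain L) :
    ∃ L', N.IsSaturatedChain L' := by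
  by_cases h : ∀ t, (∀ q, 0 < N.pre t q → N.MarkableBy L q) → t ∈ L
  · exact ⟨L, hL, h⟩
  · simp only [not_forall, exists_prop] at h
    obtain ⟨t, ht, htL⟩ := h
    exact exists_isSaturatedChain_of_isChain (L := t :: L) ⟨htL, ht, hL⟩
termination_by Fintype.card T - L.length
decreasing_by
  have := (List.nodup_cons.2 ⟨htL, hL.nodup⟩).length_le_card
  simp only [List.length_cons] at this ⊢
  omega

variable [DecidableEq P]

lemma iniM_add (k l : ℕ) : N.iniM (k + l) = N.iniM k + N.iniM l := by
  funext p; simp only [iniM, Pi.add_apply]; split_ifs <;> simp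

lemma finM_add (k l : ℕ) : N.finM (k + l) = N.finM k + N.finM l := by
  funext p; simp only [finM, Pi.add_apply]; split_ifs <;> simp

lemma pre_eq_zero_of_finM_pos {k : ℕ} (t : T) (p : P) (hp : 0 < N.finM k p) :
    N.pre t p = 0 := by
  by_cases h : p = N.fin
  · exact h ▸ N.no_cons_fin t
  · simp [finM, h] at hp

lemma IsSaturatedChain.markableBy_of_reach {L : List T} (hL : N.IsSaturatedChain L) {l : ℕ}
    {m : P → ℕ} (h : N.Reach (N.iniM l) m) {p : P} (hp : 0 < m p) : N.MarkableBy L p := by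
  induction h generalizing p with
  | refl => by_contra hne; simp [iniM, show p ≠ N.ini from fun h => hne (.inl h)] at hp
  | tail _ hstep ih =>
    obtain ⟨t, he, heq⟩ := hstep
    rw [heq p] at hp
    rcases Nat.eq_zero_or_pos (N.post t p) with h0 | h0
    · exact ih (by omega)
    · exact .inr ⟨t, hL.2 t fun q hq => ih (lt_of_lt_of_le hq (he q)), h0⟩

lemma IsChain.exists_reach_le [Fintype P] [Fintype T] :
    ∀ {L : List T}, N.IsChain L → ∀ c : ℕ, ∃ l ≤ c * (N.maxW + 1) ^ L.length, ∃ m,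
      N.Reach (N.iniM l) m ∧ ∀ p, N.MarkableBy L p → c ≤ m p
  | [], _, c => ⟨c, by simp, N.iniM c, .refl, fun p hp => by
      rcases hp with rfl | ⟨t, ht, _⟩
      · simp [iniM]
      · simp at ht⟩
  | t :: L, ⟨_, hpre, hL⟩, c => by
    obtain ⟨l, hl, m, hr, hm⟩ := hL.exists_reach_le (c * (N.maxW + 1))
    have hcW : ∀ q, c * N.pre t q ≤ c * N.maxW := fun q => Nat.mul_le_mul_left c (N.pre_le_maxW t q)
    obtain ⟨m', hr', hm'⟩ := N.exists_reach_iterate t c (m := m) fun q => by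
      rcases Nat.eq_zero_or_pos (N.pre t q) with h0 | h0
      · simp [h0]
      · have := hm q (hpre q h0); have := hcW q; nlinarith
    refine ⟨l, hl.trans ?_, m', hr.trans hr', fun p hp => ?_⟩
    · rw [List.length_cons, pow_succ]; nlinarith [Nat.zero_le c]
    have hLp : N.MarkableBy L p → c ≤ m' p := fun hLp => by
      have := hm p hLp; have := hcW p; have := hm' p; nlinarith
    rcases markableBy_cons.1 hp with hp | hpost
    · exact hLp hp
    rcases Nat.eq_zero_or_pos (N.pre t p) with h0 | h0
    · have := hm' p; rw [h0] at this; nlinarith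
    · exact hLp (hpre p h0)

lemma exists_reach_forall_le [Fintype P] [Fintype T] (hN : N.Nonredundant) (c : ℕ) :
    ∃ l ≤ c * (N.maxW + 1) ^ Fintype.card T, ∃ m, N.Reach (N.iniM l) m ∧ ∀ p, c ≤ m p := by
  obtain ⟨L, hL⟩ := exists_isSaturatedChain_of_isChain (N := N) (L := []) trivial
  obtain ⟨l, hl, m, hr, hm⟩ := hL.1.exists_reach_le c
  refine ⟨l, hl.trans (Nat.mul_le_mul_left c (Nat.pow_le_pow_right (by omega)
    hL.1.nodup.length_le_card)), m, hr, fun p => hm p ?_⟩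
  obtain ⟨k, m₀, hr₀, hp₀⟩ := hN p
  exact hL.markableBy_of_reach hr₀ hp₀

/-- The Steinitz reordering keeps every prefix of the run above `-|P|·‖T‖`; a buffer of
`‖T‖·(|P|+1)` tokens per place therefore leaves at least `‖T‖` tokens, enough for any transition. -/
theorem exists_reach_add_of_zreach [Fintype P] [Fintype T] (hN : N.Nonredundant) {k : ℕ} {m : P → ℕ}
    (h : N.ZReach (fun p => (N.iniM k p : ℤ)) (fun p => (m p : ℤ))) :
    ∃ l ≤ N.maxW * (Fintype.card P + 1) * (N.maxW + 1) ^ Fintype.card T, ∃ m',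
      N.Reach (N.iniM l) m' ∧ N.Reach (N.iniM (l + k)) (m + m') := by
  obtain ⟨ts, hts⟩ := h.exists_effSum
  obtain ⟨ts', hperm, hprefix⟩ := Steinitz.exists_perm_neg_mul_le_add_sum
    (fun t p => N.eff t p) N.abs_eff_le_maxW (s := fun p => (N.iniM k p : ℤ))
    (fun p => Int.natCast_nonneg _) ts fun p => (hts p).symm ▸ Int.natCast_nonneg _
  obtain ⟨l, hl, m', hr, hm'⟩ := N.exists_reach_forall_le hN (N.maxW * (Fintype.card P + 1))
  refine ⟨l, hl, m', hr, ?_⟩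
  obtain ⟨M, hM, hMeq⟩ := N.exists_reach_of_maxW_le ts' (m := N.iniM k + m') fun j p => by
    have h₁ := hprefix j p
    have h₂ : ((N.maxW * (Fintype.card P + 1) : ℕ) : ℤ) ≤ m' p := by exact_mod_cast hm' p
    push_cast at h₂
    simp only [Pi.add_apply, Nat.cast_add, PetriNet.effSum]
    linarith
  have hM' : M = m + m' := funext fun p => by
    have := hMeq p
    rw [PetriNet.effSum_perm hperm] at this
    have := hts p
    simp only [Pi.add_apply] at *
    omega
  rw [iniM_add, ← hM']
  exact (hr.add_right _).trans (add_comm m' _ ▸ hM)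

variable {k l : ℕ} {m m' : P → ℕ}

lemma reach_finM_of_kSound (hl : N.KSound l) (hlk : N.KSound (l + k))
    (h₁ : N.Reach (N.iniM l) m') (h₂ : N.Reach (N.iniM (l + k)) (m + m')) :
    N.Reach m (N.finM k) := by
  obtain ⟨b, hb, hmb⟩ := (hlk _ (h₂.trans ((hl m' h₁).add_left m))).exists_of_add_unconsumed
    fun t p => N.pre_eq_zero_of_finM_pos t p
  rwa [add_right_cancel (hb.symm.trans (by rw [finM_add, add_comm]))] at hmb

lemma reach_finM_of_generalisedSound (hG : N.GeneralisedSound)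
    (h₁ : N.Reach (N.iniM l) m') (h₂ : N.Reach (N.iniM (l + k)) (m + m')) :
    N.Reach m (N.finM k) := by
  refine N.reach_finM_of_kSound (l := l + 1) (m' := m' + N.iniM 1)
    (hG _ (by omega)) (hG _ (by omega)) ?_ ?_
  · rw [iniM_add]
    exact h₁.add_right _
  · rw [show l + 1 + k = l + k + 1 by omega, iniM_add, ← add_assoc]
    exact h₂.add_right _

end WorkflowNet

/-- Generalised soundness coincides with strong `k`-soundness for all `k`;
moreover strong unsoundness at `k` yields unsoundness at some small `k'`. -/
theorem generalised_iff_strongly_sound {P T : Type} [DecidableEq P] [Fintype P]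
    [Fintype T] (N : WorkflowNet P T) (hN : N.Nonredundant) :
    (N.GeneralisedSound ↔ ∀ k : ℕ, N.StronglyKSound k) ∧
    ∀ k : ℕ, ¬ N.StronglyKSound k →
      ∃ k' : ℕ,
        k' ≤ k + (N.toPetriNet.maxW + 2) ^ (Fintype.card T) *
              max N.toPetriNet.maxW k * (Fintype.card P * (Fintype.card P + 2)) ∧
        ¬ N.KSound k' := by
  refine ⟨⟨fun hG k m hm => ?_, fun hS k _ m hm => hS k m hm.zreach⟩, fun k hk => ?_⟩
  · obtain ⟨l, -, m', h₁, h₂⟩ := N.exists_reach_add_of_zreach hN hm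
    exact N.reach_finM_of_generalisedSound hG h₁ h₂
  obtain ⟨m, hm, hnot⟩ : ∃ m : P → ℕ, _ ∧ ¬ N.toPetriNet.Reach m (N.finM k) := by
    simpa [WorkflowNet.StronglyKSound] using hk
  obtain ⟨l, hl, m', h₁, h₂⟩ := N.exists_reach_add_of_zreach hN hm
  have hbound : l ≤ (N.maxW + 2) ^ Fintype.card T * max N.maxW k *
      (Fintype.card P * (Fintype.card P + 2)) := by
    have hP : 1 ≤ Fintype.card P := Fintype.card_pos_iff.2 ⟨N.ini⟩
    refine hl.trans (le_of_le_of_eq (b := max N.maxW k * (Fintype.card P * (Fintype.card P + 2)) *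
      (N.maxW + 2) ^ Fintype.card T) ?_ (by ring))
    gcongr
    · exact le_max_left _ _
    · nlinarith
    · omega
  by_contra! hsound
  exact hnot (N.reach_finM_of_kSound (hsound l (by omega)) (hsound (l + k) (by omega)) h₁ h₂)
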